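/- In the space (S^α)_1 (for α an infinite cardinal), if t ∈ {0,1}^α is a point with only finitely many coordinates equal to 0, and t lies in the closure of a set U with t ∉ U, then there exists an injective ordinary sequence of points of U converging to t. -/

import Mathlib

/-!
The product neighbourhood `V` of `t` cut out by its finitely many zero coordinates is open, and
every sequence inside `V` converges to `t` in the product topology, since the only neighbourhood
of `one` in the Sierpiński space is everything. As `t ∈ closure U \ U` in the join with the
cofinite topology, `V ∩ U` cannot be finite (else `V` minus it would be a neighbourhood of `t`
missing `U`), so any enumeration of `V ∩ U` by `ℕ` is injective, hence converges to `t` in the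
cofinite topology as well.
-/

open Filter Topology

universe u

/-- The two points of the Sierpiński space. -/
inductive SPt : Type
  | zero
  | one
deriving DecidableEq

/-- The Sierpiński topology: `{zero}` is open, `{one}` is not. -/
instance : TopologicalSpace SPt := TopologicalSpace.generateFrom {{SPt.zero}}

/-- `A` is closed under limits of `o`-indexed transfinite sequences for all infinite
ordinals `o ≤ β` (β an infinite cardinal, viewed as an ordinal). -/
def OrdSeqClosed {X : Type u} [TopologicalSpace X] (β : Cardinal.{u}) (A : Set X) : Prop :=
  ∀ o : Ordinal.{u}, Ordinal.omega0 ≤ o → o ≤ β.ord →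
    ∀ f : o.ToType → X, (∀ i, f i ∈ A) →
    ∀ x : X, Filter.Tendsto f Filter.atTop (nhds x) → x ∈ A

/-- A space is β-sequential if every such subset is closed. -/
def IsBetaSequential (X : Type u) [TopologicalSpace X] (β : Cardinal.{u}) : Prop :=
  ∀ A : Set X, OrdSeqClosed β A → IsClosed A

/-- `A` contains limits of all convergent transfinite sequences of its points. -/
def TransSeqClosed {X : Type u} [TopologicalSpace X] (A : Set X) : Prop :=
  ∀ o : Ordinal.{u}, Ordinal.omega0 ≤ o →
    ∀ f : o.ToType → X, (∀ i, f i ∈ A) →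
    ∀ x : X, Filter.Tendsto f Filter.atTop (nhds x) → x ∈ A

/-- Pseudoradial space. -/
def IsPseudoradial (X : Type u) [TopologicalSpace X] : Prop :=
  ∀ A : Set X, TransSeqClosed A → IsClosed A

/-- The cofinite topology on a type. -/
def cofiniteTopology (Y : Type u) : TopologicalSpace Y :=
  TopologicalSpace.cofinite (X := Y)

namespace SPt

theorem isOpen_singleton_zero : IsOpen ({zero} : Set SPt) :=
  TopologicalSpace.isOpen_generateFrom_of_mem rfl

theorem eq_univ_of_isOpen_of_one_mem {s : Set SPt} (hs : IsOpen s) (h : one ∈ s) :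
    s = Set.univ := by
  induction hs with
  | basic u hu =>
    rw [Set.mem_singleton_iff] at hu
    subst hu
    cases h
  | univ => rfl
  | inter u v _ _ ihu ihv => rw [ihu h.1, ihv h.2, Set.univ_inter]
  | sUnion S _ ih =>
    obtain ⟨u, huS, hu⟩ := h
    exact Set.eq_univ_of_univ_subset (ih u huS hu ▸ Set.subset_sUnion_of_mem huS)

theorem nhds_one : 𝓝 one = ⊤ := by
  refine top_unique fun s hs => ?_
  obtain ⟨o, hos, hoo, ho1⟩ := mem_nhds_iff.mp hs
  exact Filter.mem_top.mpr
    (Set.eq_univ_of_univ_subset (eq_univ_of_isOpen_of_one_mem hoo ho1 ▸ hos))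

theorem tendsto_nhds_pi {ι κ : Type*} {l : Filter κ} {f : κ → ι → SPt} {t : ι → SPt}
    (h : ∀ i, t i = zero → ∀ n, f n i = zero) : Tendsto f l (𝓝 t) := by
  refine tendsto_pi_nhds.mpr fun i => ?_
  cases hti : t i with
  | one => simp only [nhds_one, tendsto_top]
  | zero => simpa only [h i hti] using tendsto_const_nhds

end SPt

theorem nhds_cofiniteTopology {X : Type u} (x : X) :
    @nhds X (cofiniteTopology X) x = pure x ⊔ cofinite := by
  ext s
  rw [@mem_nhds_iff X (cofiniteTopology X) x s]
  constructor
  · rintro ⟨V, hVs, hV, hxV⟩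
    exact mem_sup.mpr ⟨hVs hxV, mem_of_superset (hV ⟨x, hxV⟩) hVs⟩
  · rintro ⟨hxs, hs⟩
    exact ⟨s, subset_rfl, fun _ => hs, hxs⟩

theorem Function.Injective.tendsto_nhds_cofiniteTopology {X : Type u} {f : ℕ → X}
    (hf : Function.Injective f) (x : X) :
    Tendsto f atTop (@nhds X (cofiniteTopology X) x) := by
  rw [nhds_cofiniteTopology, ← Nat.cofinite_eq_atTop]
  exact hf.tendsto_cofinite.mono_right le_sup_right

theorem infinite_inter_of_mem_closure_inf_cofinite {X : Type u} {τ : TopologicalSpace X}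
    {U V : Set X} {t : X} (htU : t ∈ @closure X (τ ⊓ cofiniteTopology X) U) (htnU : t ∉ U)
    (hV : V ∈ @nhds X τ t) : (V ∩ U).Infinite := by
  intro hfin
  have hmem : V ∩ (V ∩ U)ᶜ ∈ @nhds X (τ ⊓ cofiniteTopology X) t := by
    rw [nhds_inf, nhds_cofiniteTopology]
    exact inter_mem_inf hV ⟨fun h => htnU h.2, hfin.compl_mem_cofinite⟩
  obtain ⟨y, ⟨hyV, hy⟩, hyU⟩ :=
    (@mem_closure_iff_nhds X (τ ⊓ cofiniteTopology X) t U).mp htU _ hmem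
  exact hy ⟨hyV, hyU⟩

theorem exists_injective_seq_tendsto_general (α : Cardinal.{u})
    (t : α.ord.ToType → SPt) (ht : {i | t i = SPt.zero}.Finite)
    (U : Set (α.ord.ToType → SPt))
    (htU : t ∈ @closure _ (Pi.topologicalSpace ⊓ cofiniteTopology (α.ord.ToType → SPt)) U)
    (htnU : t ∉ U) :
    ∃ f : ℕ → (α.ord.ToType → SPt), Function.Injective f ∧ (∀ n, f n ∈ U) ∧
      Filter.Tendsto f Filter.atTop
        (@nhds _ (Pi.topologicalSpace ⊓ cofiniteTopology (α.ord.ToType → SPt)) t) := by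
  set V := {i | t i = SPt.zero}.pi fun _ => ({SPt.zero} : Set SPt)
  have hV : V ∈ 𝓝 t :=
    (isOpen_set_pi ht fun _ _ => SPt.isOpen_singleton_zero).mem_nhds fun _ hi => hi
  have hinf := infinite_inter_of_mem_closure_inf_cofinite htU htnU hV
  set f := hinf.natEmbedding _
  have hf : Function.Injective (Subtype.val ∘ f) := Subtype.val_injective.comp f.injective
  refine ⟨Subtype.val ∘ f, hf, fun n => (f n).2.2, ?_⟩
  rw [nhds_inf, tendsto_inf]
  exact ⟨SPt.tendsto_nhds_pi fun i hi n => (f n).2.1 i hi, hf.tendsto_nhds_cofiniteTopology t⟩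

/-- In `(S^α)_1`, if `t` has only finitely many coordinates equal to `0` and
`t ∈ closure U \ U`, then some injective ordinary sequence of points of `U` converges
to `t`. -/
theorem exists_injective_seq_tendsto (α : Cardinal.{u}) (hα : Cardinal.aleph0 ≤ α)
    (t : α.ord.ToType → SPt) (ht : {i | t i = SPt.zero}.Finite)
    (U : Set (α.ord.ToType → SPt))
    (htU : t ∈ @closure _ (Pi.topologicalSpace ⊓ cofiniteTopology (α.ord.ToType → SPt)) U)
    (htnU : t ∉ U) :
    ∃ f : ℕ → (α.ord.ToType → SPt), Function.Injective f ∧ (∀ n, f n ∈ U) ∧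
      Filter.Tendsto f Filter.atTop
        (@nhds _ (Pi.topologicalSpace ⊓ cofiniteTopology (α.ord.ToType → SPt)) t) :=
  exists_injective_seq_tendsto_general α t ht U htU htnU
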